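/- arXiv:math/0001152 — 2 statements merged into one kernel-verified Lean document; each statement's English description precedes it below -/
import Mathlib

section
/- Let d and g be integers with 2 ≤ g ≤ 2d. Then the extensions I_f and J_f of the ideals I and J to the localization ℂ[x_{ij}]_f of ℂ[x_{ij}] at f are equal: I_f = J_f. -/
/-!
Let `A` be `N` with the last standard basis vector appended as a final column. Expanding along
that column, `det A` is the minor of `N` without its last row, a factor of `f`, hence a unit in
the localization. By Cramer's rule the last row of `adj A * M_c` consists of the determinants
`det (A with its last column replaced by column j of M)`, which are generators of `J` or zero.
So `det A ^ (g - 1) * det M_c = det (adj A * M_c) ∈ J`, and `I_f ⊆ J_f`; the reverse inclusion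
holds already before localizing.
-/

open MvPolynomial Matrix

/-- The map `Fin (g-1) → Fin g` skipping the index `i` (deleting the `i`-th row). -/
def rowDelete {g : ℕ} (i : Fin g) : Fin (g - 1) → Fin g :=
  fun j => if (j : ℕ) < (i : ℕ) then ⟨j, lt_of_lt_of_le j.isLt (Nat.sub_le g 1)⟩
    else ⟨(j : ℕ) + 1, by have := j.isLt; omega⟩

/-- The generic `g × 2d` matrix `M = (x_{ij})` over `ℂ[x_{ij}]`. -/
noncomputable def genericMatrix (g d : ℕ) :
    Matrix (Fin g) (Fin (2 * d)) (MvPolynomial (Fin g × Fin (2 * d)) ℂ) :=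
  fun i j => X (i, j)

/-- The ideal `I` generated by all `g × g` minors of `M`. -/
noncomputable def idealI (g d : ℕ) : Ideal (MvPolynomial (Fin g × Fin (2 * d)) ℂ) :=
  Ideal.span { p | ∃ c : Fin g → Fin (2 * d), StrictMono c ∧
    p = ((genericMatrix g d).submatrix id c).det }

/-- The ideal `J` generated by the minors `det M_{(1,…,g-1,i)}` for `g ≤ i ≤ 2d`
(here written 0-indexed: columns `0,…,g-2` together with a column `i` with
`g - 1 ≤ i`). -/
noncomputable def idealJ (g d : ℕ) (hgd : g ≤ 2 * d) :
    Ideal (MvPolynomial (Fin g × Fin (2 * d)) ℂ) :=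
  Ideal.span { p | ∃ i : Fin (2 * d), g - 1 ≤ (i : ℕ) ∧
    p = ((genericMatrix g d).submatrix id
      (fun k : Fin g => if (k : ℕ) < g - 1 then Fin.castLE hgd k else i)).det }

/-- `f` is the product of the `(g-1) × (g-1)` minors of the submatrix `N` of `M`
consisting of the first `g - 1` columns (one minor for each deleted row). -/
noncomputable def theF (g d : ℕ) (hgd : g ≤ 2 * d) :
    MvPolynomial (Fin g × Fin (2 * d)) ℂ :=
  ∏ i : Fin g,
    ((genericMatrix g d).submatrix (rowDelete i)
      (fun j : Fin (g - 1) => Fin.castLE (le_trans (Nat.sub_le g 1) hgd) j)).det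

section General

variable {R : Type*} [CommRing R] {n : Type*} [Fintype n] [DecidableEq n]

theorem Matrix.det_mem_of_row_mem {B : Matrix n n R} {J : Ideal R} (r : n)
    (h : ∀ k, B r k ∈ J) : B.det ∈ J := by
  rw [det_apply']
  exact Ideal.sum_mem _ fun σ _ => Ideal.mul_mem_left _ _ <|
    Ideal.prod_mem _ (Finset.mem_univ (σ.symm r)) (by simpa using h (σ.symm r))

theorem Matrix.det_pow_mul_det_mem_of_cramer_mem (A B : Matrix n n R) {J : Ideal R} (r : n)
    (h : ∀ k, cramer A (fun i => B i k) r ∈ J) :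
    A.det ^ (Fintype.card n - 1) * B.det ∈ J := by
  rw [← det_adjugate, ← det_mul]
  refine det_mem_of_row_mem r fun k => ?_
  simpa [cramer_eq_adjugate_mulVec, mul_apply, mulVec, dotProduct] using h k

theorem Matrix.det_eq_det_submatrix_castSucc_of_lastCol_eq_single {m : ℕ}
    (A : Matrix (Fin (m + 1)) (Fin (m + 1)) R)
    (h : (fun i => A i (Fin.last m)) = Pi.single (Fin.last m) 1) :
    A.det = (A.submatrix Fin.castSucc Fin.castSucc).det := by
  have hA := congrFun h
  rw [det_succ_column A (Fin.last m), Fintype.sum_eq_single (Fin.last m)]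
  · simp [hA]
  · intro i hi
    simp [hA, hi]

theorem algebraMap_mem_map_of_pow_mul_mem {S : Type*} [CommRing S] [Algebra R S] {a b : R}
    {J : Ideal R} {k : ℕ} (ha : IsUnit (algebraMap R S a)) (h : a ^ k * b ∈ J) :
    algebraMap R S b ∈ J.map (algebraMap R S) := by
  have := Ideal.mem_map_of_mem (algebraMap R S) h
  rwa [map_mul, map_pow, Ideal.unit_mul_mem_iff_mem _ (ha.pow k)] at this

end General

noncomputable def augmentedN (g d : ℕ) (hgd : g ≤ 2 * d) :
    Matrix (Fin g) (Fin g) (MvPolynomial (Fin g × Fin (2 * d)) ℂ) :=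
  Matrix.of fun i k => if (k : ℕ) < g - 1 then X (i, Fin.castLE hgd k)
    else if (i : ℕ) = g - 1 then 1 else 0

def colsJ {g d : ℕ} (hgd : g ≤ 2 * d) (j : Fin (2 * d)) : Fin g → Fin (2 * d) :=
  fun k => if (k : ℕ) < g - 1 then Fin.castLE hgd k else j

theorem colsJ_strictMono {g d : ℕ} (hgd : g ≤ 2 * d) {j : Fin (2 * d)}
    (hj : g - 1 ≤ (j : ℕ)) :
    StrictMono (colsJ hgd j) := by
  intro a b hab
  simp only [colsJ, Fin.lt_def] at hab ⊢
  split_ifs <;> simp <;> omega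

theorem idealJ_le_idealI {g d : ℕ} (hgd : g ≤ 2 * d) : idealJ g d hgd ≤ idealI g d := by
  rw [idealJ, Ideal.span_le]
  rintro _ ⟨j, hj, rfl⟩
  exact Ideal.subset_span ⟨colsJ hgd j, colsJ_strictMono hgd hj, rfl⟩

section AugmentedN

variable {g d : ℕ} (hgd : g ≤ 2 * d)

theorem updateCol_augmentedN (hg : 0 < g) (j : Fin (2 * d)) :
    (augmentedN g d hgd).updateCol ⟨g - 1, by omega⟩ (fun i => genericMatrix g d i j) =
      (genericMatrix g d).submatrix id (colsJ hgd j) := by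
  ext i k
  by_cases hk : (k : ℕ) < g - 1
  · simp [augmentedN, colsJ, genericMatrix, hk, Fin.ext_iff, hk.ne]
  · have hk' : (k : ℕ) = g - 1 := by omega
    simp [updateCol_apply, colsJ, genericMatrix, Fin.ext_iff, hk']

theorem cramer_augmentedN_mem_idealJ (hg : 0 < g) (j : Fin (2 * d)) :
    cramer (augmentedN g d hgd) (fun i => genericMatrix g d i j) ⟨g - 1, by omega⟩ ∈
      idealJ g d hgd := by
  rw [cramer_apply, updateCol_augmentedN hgd hg]
  rcases le_or_gt (g - 1) (j : ℕ) with hj | hj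
  · exact Ideal.subset_span ⟨j, hj, rfl⟩
  · -- for `j < g - 1` the column `j` occurs twice
    rw [det_zero_of_column_eq (i := ⟨j, by omega⟩) (j := ⟨g - 1, by omega⟩)]
    · exact Ideal.zero_mem _
    · simp [Fin.ext_iff, hj.ne]
    · simp [colsJ, genericMatrix, hj]

theorem det_augmentedN_pow_mul_det_mem_idealJ (hg : 0 < g) (c : Fin g → Fin (2 * d)) :
    (augmentedN g d hgd).det ^ (g - 1) * ((genericMatrix g d).submatrix id c).det ∈
      idealJ g d hgd := by
  have := det_pow_mul_det_mem_of_cramer_mem (augmentedN g d hgd)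
    ((genericMatrix g d).submatrix id c) _ fun k => cramer_augmentedN_mem_idealJ hgd hg (c k)
  rwa [Fintype.card_fin] at this

theorem det_augmentedN (hg : 0 < g) :
    (augmentedN g d hgd).det =
      ((genericMatrix g d).submatrix (rowDelete (⟨g - 1, by omega⟩ : Fin g))
        (fun j : Fin (g - 1) => Fin.castLE (le_trans (Nat.sub_le g 1) hgd) j)).det := by
  let e : Fin (g - 1 + 1) ≃ Fin g := finCongr (by omega)
  rw [← det_submatrix_equiv_self e, det_eq_det_submatrix_castSucc_of_lastCol_eq_single]
  · congr 1
    ext i k : 2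
    have hk : ((e k.castSucc : Fin g) : ℕ) < g - 1 := k.isLt
    simp only [submatrix_apply, augmentedN, genericMatrix, of_apply, rowDelete, i.isLt, hk,
      if_true]
    rfl
  · ext i
    simp [augmentedN, e, Pi.single_apply, Fin.ext_iff]

theorem det_augmentedN_dvd_theF (hg : 0 < g) : (augmentedN g d hgd).det ∣ theF g d hgd := by
  rw [det_augmentedN hgd hg]
  exact Finset.dvd_prod_of_mem _ (Finset.mem_univ _)

end AugmentedN

/-- Proposition (4.1): the extensions of `I` and `J` to the localization
`ℂ[x_{ij}]_f` coincide. -/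
theorem extension_of_I_eq_extension_of_J (g d : ℕ) (hg : 2 ≤ g) (hgd : g ≤ 2 * d) :
    (idealI g d).map
        (algebraMap (MvPolynomial (Fin g × Fin (2 * d)) ℂ)
          (Localization.Away (theF g d hgd))) =
      (idealJ g d hgd).map
        (algebraMap (MvPolynomial (Fin g × Fin (2 * d)) ℂ)
          (Localization.Away (theF g d hgd))) := by
  have hg : 0 < g := by omega
  refine le_antisymm ?_ (Ideal.map_mono (idealJ_le_idealI hgd))
  rw [idealI, Ideal.map_span, Ideal.span_le]
  rintro _ ⟨_, ⟨c, -, rfl⟩, rfl⟩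
  exact algebraMap_mem_map_of_pow_mul_mem
    (IsLocalization.Away.isUnit_of_dvd _ (det_augmentedN_dvd_theF hgd hg))
    (det_augmentedN_pow_mul_det_mem_idealJ hgd hg c)
end

section
/- Let d and g be integers with 2 ≤ g ≤ 2d. Then the extension J_f of the ideal J to the localization ℂ[x_{ij}]_f is a radical ideal; equivalently, the quotient ring ℂ[x_{ij}]_f / J_f is reduced. -/
open MvPolynomial Matrix

lemma rowDelete_eq_succAbove {n : ℕ} (i : Fin (n+1)) (j : Fin n) :
    rowDelete i j = Fin.succAbove i j := by
  unfold rowDelete Fin.succAbove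
  by_cases h : (j : ℕ) < (i : ℕ)
  · rw [if_pos h, if_pos (show Fin.castSucc j < i by simpa [Fin.lt_def] using h)]
    rfl
  · rw [if_neg h, if_neg (show ¬ Fin.castSucc j < i by simpa [Fin.lt_def] using h)]
    rfl

lemma det_X_ne_zero {σ : Type*} {n : ℕ} (w : Fin n → Fin n → σ)
    (hw : Function.Injective fun p : Fin n × Fin n => w p.1 p.2) :
    (Matrix.det (Matrix.of fun i j => (X (w i j) : MvPolynomial σ ℂ))) ≠ 0 := by
  classical
  intro h
  have h2 : MvPolynomial.eval
      (fun u => if ∃ l : Fin n, u = w l l then (1:ℂ) else 0)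
      (Matrix.det (Matrix.of fun i j => (X (w i j) : MvPolynomial σ ℂ))) = 0 := by
    rw [h, map_zero]
  rw [RingHom.map_det, RingHom.mapMatrix_apply] at h2
  have h3 : (Matrix.of fun i j => (X (w i j) : MvPolynomial σ ℂ)).map
      (MvPolynomial.eval fun u => if ∃ l : Fin n, u = w l l then (1:ℂ) else 0) = 1 := by
    ext i j
    simp only [Matrix.map_apply, Matrix.of_apply, MvPolynomial.eval_X, Matrix.one_apply]
    congr 1
    simp only [eq_iff_iff]
    constructor
    · rintro ⟨l, hl⟩
      have h4 : ((i, j) : Fin n × Fin n) = (l, l) := hw hl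
      rw [Prod.mk.injEq] at h4
      rw [h4.1, h4.2]
    · rintro rfl; exact ⟨i, rfl⟩
  rw [h3, Matrix.det_one] at h2
  exact one_ne_zero h2

noncomputable def minorM (n d : ℕ) (hgd : n + 1 ≤ 2 * d) (k : Fin (n+1)) :
    MvPolynomial (Fin (n+1) × Fin (2*d)) ℂ :=
  ((genericMatrix (n+1) d).submatrix (rowDelete k)
    (fun j : Fin ((n+1) - 1) => Fin.castLE (le_trans (Nat.sub_le (n+1) 1) hgd) j)).det

noncomputable def genJ (n d : ℕ) (hgd : n + 1 ≤ 2 * d) (i : Fin (2*d)) :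
    MvPolynomial (Fin (n+1) × Fin (2*d)) ℂ :=
  ((genericMatrix (n+1) d).submatrix id
    (fun k : Fin (n+1) => if (k : ℕ) < (n+1) - 1 then Fin.castLE hgd k else i)).det

lemma genJ_eq_sum (n d : ℕ) (hgd : n + 1 ≤ 2 * d) (i : Fin (2*d)) :
    genJ n d hgd i = ∑ k : Fin (n+1),
      (-1)^((k:ℕ)+n) * X (k, i) * minorM n d hgd k := by
  rw [genJ, Matrix.det_succ_column _ (Fin.last n)]
  apply Finset.sum_congr rfl
  intro k _
  have h1 : ((genericMatrix (n+1) d).submatrix id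
      (fun k : Fin (n+1) => if (k : ℕ) < (n+1) - 1 then Fin.castLE hgd k else i))
      k (Fin.last n) = X (k, i) := by
    simp [genericMatrix, Matrix.submatrix_apply]
  have h2 : (((genericMatrix (n+1) d).submatrix id
      (fun k : Fin (n+1) => if (k : ℕ) < (n+1) - 1 then Fin.castLE hgd k else i)).submatrix
      k.succAbove (Fin.last n).succAbove) = ((genericMatrix (n+1) d).submatrix (rowDelete k)
    (fun j : Fin ((n+1) - 1) => Fin.castLE (le_trans (Nat.sub_le (n+1) 1) hgd) j)) := by
    ext a b
    simp only [Matrix.submatrix_apply, id_eq, genericMatrix, Fin.succAbove_last,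
      Fin.coe_castSucc]
    rw [rowDelete_eq_succAbove]
    congr 1
    rw [if_pos (by simpa using b.isLt)]
    ext
    simp
  rw [h1, minorM, h2, Fin.val_last]

lemma theF_eq_prod (n d : ℕ) (hgd : n + 1 ≤ 2 * d) :
    theF (n+1) d hgd = ∏ k : Fin (n+1), minorM n d hgd k := rfl

set_option maxHeartbeats 2000000 in
/-- The extension `J_f` of `J` to the localization `ℂ[x_{ij}]_f` is a radical ideal. -/
theorem extension_of_J_isRadical (g d : ℕ) (hg : 2 ≤ g) (hgd : g ≤ 2 * d) :
    ((idealJ g d hgd).map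
        (algebraMap (MvPolynomial (Fin g × Fin (2 * d)) ℂ)
          (Localization.Away (theF g d hgd)))).IsRadical := by
  classical
  obtain ⟨n, rfl⟩ : ∃ n, g = n + 1 := ⟨g - 1, by omega⟩
  set f := theF (n+1) d hgd with hfdef
  have hfm : f = ∏ k : Fin (n+1), minorM n d hgd k := theF_eq_prod n d hgd
  have hfne : f ≠ 0 := by
    rw [hfm]
    refine Finset.prod_ne_zero_iff.mpr fun k _ => ?_
    refine det_X_ne_zero (fun a b =>
      ((rowDelete k a : Fin (n+1)), (Fin.castLE (le_trans (Nat.sub_le (n+1) 1) hgd) b))) ?_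
    rintro ⟨a, b⟩ ⟨a', b'⟩ hpq
    simp only [Prod.mk.injEq] at hpq ⊢
    obtain ⟨hr, hc⟩ := hpq
    refine ⟨?_, Fin.castLE_injective _ hc⟩
    rw [rowDelete_eq_succAbove, rowDelete_eq_succAbove] at hr
    exact Fin.succAbove_right_injective hr
  clear_value f
  clear hfdef
  haveI hdom : IsDomain (Localization.Away f) :=
    IsLocalization.isDomain_localization
      (powers_le_nonZeroDivisors_of_noZeroDivisors hfne)
  set alg := algebraMap (MvPolynomial (Fin (n+1) × Fin (2 * d)) ℂ)
    (Localization.Away f) with halg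
  have hmunit : ∀ k, IsUnit (alg (minorM n d hgd k)) := fun k =>
    IsLocalization.Away.isUnit_of_dvd (x := f)
      (hfm ▸ Finset.dvd_prod_of_mem _ (Finset.mem_univ k))
  obtain ⟨u, huval⟩ : ∃ u : (Localization.Away f)ˣ,
      (u : Localization.Away f) = alg (minorM n d hgd (Fin.last n)) :=
    ⟨(hmunit (Fin.last n)).unit, (hmunit (Fin.last n)).unit_spec⟩
  set Ssum : Fin (2*d) → Localization.Away f := fun i =>
    ∑ k : Fin n, (-1)^((k:ℕ)+n) * alg (X (k.castSucc, i)) * alg (minorM n d hgd k.castSucc)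
    with hSsum
  set e : Fin (2*d) → Localization.Away f := fun i => -((u⁻¹ : _) * Ssum i) with he
  set v : Fin (n+1) × Fin (2*d) → Localization.Away f := fun p =>
    if p.1 = Fin.last n ∧ n ≤ (p.2:ℕ) then e p.2 else alg (X p) with hv
  set σp := MvPolynomial.eval₂Hom (alg.comp (C : ℂ →+* _)) v with hσ
  have hS2 : ∀ i, Ssum i = ∑ k : Fin n,
      (-1)^((k:ℕ)+n) * alg (X (k.castSucc, i)) * alg (minorM n d hgd k.castSucc) :=
    fun i => congrFun hSsum i
  have he2 : ∀ i, e i = -(((u⁻¹ : (Localization.Away f)ˣ) : Localization.Away f) * Ssum i) :=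
    fun i => congrFun he i
  -- σp fixes the minors
  have hσm : ∀ k, σp (minorM n d hgd k) = alg (minorM n d hgd k) := by
    intro k
    rw [minorM, RingHom.map_det, RingHom.map_det, RingHom.mapMatrix_apply,
      RingHom.mapMatrix_apply]
    congr 1
    ext a b
    simp only [Matrix.map_apply, Matrix.submatrix_apply, genericMatrix, hσ, coe_eval₂Hom,
      eval₂_X]
    rw [hv]
    exact if_neg (by simp)
  have hσf : σp f = alg f := by
    rw [congrArg σp hfm, congrArg alg hfm, map_prod, map_prod]
    exact Finset.prod_congr rfl fun k _ => hσm k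
  have hσfu : IsUnit (σp f) := by
    rw [hσf]; exact IsLocalization.Away.algebraMap_isUnit f
  set π := IsLocalization.Away.lift (S := Localization.Away f) (g := σp) f hσfu with hπ
  have πeq : ∀ r, π (alg r) = σp r := fun r =>
    IsLocalization.Away.lift_eq (S := Localization.Away f) (g := σp) f hσfu r
  clear_value π σp v e Ssum
  -- image of the cofactor expansion under alg
  have hlast : ((-1 : Localization.Away f))^(((Fin.last n) : ℕ) + n) = 1 := by
    rw [Fin.val_last, ← two_mul, pow_mul]
    norm_num
  have hgenJ : ∀ i : Fin (2*d), alg (genJ n d hgd i)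
      = Ssum i + alg (X (Fin.last n, i)) * (u : Localization.Away f) := by
    intro i
    rw [genJ_eq_sum, map_sum]
    simp only [_root_.map_mul, map_pow, _root_.map_neg, _root_.map_one]
    rw [Fin.sum_univ_castSucc, hlast, one_mul, huval, hS2 i]
    simp only [Fin.coe_castSucc]
  -- σp kills the generators
  have hσJ : ∀ i : Fin (2*d), n ≤ (i:ℕ) → σp (genJ n d hgd i) = 0 := by
    intro i hi
    rw [genJ_eq_sum, map_sum]
    have hσX : ∀ s : Fin (n+1) × Fin (2*d), σp (X s) = v s := fun s => by
      rw [hσ]; exact eval₂Hom_X' _ _ _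
    simp only [_root_.map_mul, map_pow, _root_.map_neg, _root_.map_one, hσm, hσX]
    rw [Fin.sum_univ_castSucc]
    have hv1 : ∀ k : Fin n, v (k.castSucc, i) = alg (X (k.castSucc, i)) := by
      intro k
      rw [hv]
      exact if_neg (by simp [(Fin.castSucc_lt_last k).ne])
    have hv2 : v (Fin.last n, i) = e i := by
      rw [hv]; exact if_pos ⟨rfl, hi⟩
    simp only [hv1, hv2, Fin.coe_castSucc]
    rw [hlast, one_mul, ← huval, he2 i, ← hS2 i]
    have h5 : ((u⁻¹ : (Localization.Away f)ˣ) : Localization.Away f) * u = 1 := u.inv_mul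
    linear_combination (-(Ssum i)) * h5
  -- J_f ≤ ker π
  set Jf := (idealJ (n+1) d hgd).map alg with hJf
  have hJker : Jf ≤ RingHom.ker π := by
    rw [hJf, idealJ, Ideal.map_span, Ideal.span_le]
    rintro q ⟨p, ⟨i, hi, rfl⟩, rfl⟩
    rw [SetLike.mem_coe, RingHom.mem_ker]
    show π (alg (genJ n d hgd i)) = 0
    rw [πeq, hσJ i hi]
  -- generators belong to Jf
  have hmemJf : ∀ i : Fin (2*d), n ≤ (i:ℕ) → alg (genJ n d hgd i) ∈ Jf := by
    intro i hi
    exact Ideal.mem_map_of_mem _ (Ideal.subset_span ⟨i, hi, rfl⟩)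
  clear_value Jf
  -- ker π ≤ J_f
  set Q := Ideal.Quotient.mk Jf with hQ
  have hQv : ∀ s : Fin (n+1) × Fin (2*d), Q (v s) = Q (alg (X s)) := by
    rintro ⟨k, i⟩
    rw [hv]
    dsimp only
    split_ifs with h
    · obtain ⟨rfl, hni⟩ := h
      rw [Ideal.Quotient.eq]
      have hdiff : e i - alg (X (Fin.last n, i))
          = -(((u⁻¹ : (Localization.Away f)ˣ) : Localization.Away f)
              * alg (genJ n d hgd i)) := by
        rw [hgenJ i, he2 i]
        have h5 : ((u⁻¹ : (Localization.Away f)ˣ) : Localization.Away f) * u = 1 := u.inv_mul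
        linear_combination (alg (X (Fin.last n, i))) * h5
      rw [hdiff]
      exact neg_mem (Ideal.mul_mem_left _ _ (hmemJf i hni))
    · rfl
  have hQσ : ∀ r, Q (σp r) = Q (alg r) := by
    have hcomp : (Q.comp σp) = Q.comp alg := by
      apply MvPolynomial.ringHom_ext
      · intro a
        simp [hσ]
      · intro s
        have hσX : σp (X s) = v s := by rw [hσ]; exact eval₂Hom_X' _ _ _
        simp only [RingHom.comp_apply, hσX]
        exact hQv s
    intro r
    exact DFunLike.congr_fun hcomp r
  have hker : RingHom.ker π ≤ Jf := by
    intro a ha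
    rw [RingHom.mem_ker] at ha
    obtain ⟨⟨r, s⟩, hs⟩ := IsLocalization.surj (Submonoid.powers f) a
    have hsu : IsUnit (alg (s : MvPolynomial (Fin (n+1) × Fin (2 * d)) ℂ)) :=
      IsLocalization.map_units _ s
    have h4 : a * alg (s : MvPolynomial (Fin (n+1) × Fin (2 * d)) ℂ) = alg r := hs
    have h1 : σp r = 0 := by
      rw [← πeq, ← h4, _root_.map_mul, ha, zero_mul]
    have h2 : alg r ∈ Jf := by
      have h6 := hQσ r
      rw [h1, map_zero] at h6
      exact (Ideal.Quotient.eq_zero_iff_mem).mp h6.symm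
    have h3 : a = alg r * ((hsu.unit⁻¹ : _) : Localization.Away f) := by
      calc a = a * hsu.unit * ((hsu.unit⁻¹ : _) : Localization.Away f) :=
            (Units.mul_inv_cancel_right _ _).symm
        _ = alg r * ((hsu.unit⁻¹ : _) : Localization.Away f) := by
            rw [IsUnit.unit_spec, h4]
    rw [h3]
    exact Ideal.mul_mem_right _ _ h2
  have hfinal : Jf = RingHom.ker π := le_antisymm hJker hker
  rw [hfinal]
  exact (RingHom.ker_isPrime π).isRadical
end
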